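/- Let a < b be real numbers and q : ℝ → ℝ continuous on [a, b]. Suppose λ, μ ∈ ℝ with λ ≠ μ, and y, z : ℝ → ℝ are twice continuously differentiable on [a, b], satisfy -y''(x) + q(x) y(x) = λ y(x) and -z''(x) + q(x) z(x) = μ z(x) for all x ∈ [a, b], and satisfy y(a) = y(b) = 0 and z(a) = z(b) = 0. Then ∫_a^b y(x) z(x) dx = 0. -/

import Mathlib

/-!
The Wronskian `W = y z' - y' z` of two solutions has derivative `y z'' - y'' z = (λ - μ) y z`,
the potential `q` cancelling. Integrating over `[a, b]` gives
`(λ - μ) ∫ y z = W b - W a`, and both boundary values vanish under Dirichlet conditions.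
-/

open Set

section Wronskian

variable {𝕜 : Type*} [NontriviallyNormedField 𝕜]

noncomputable def wronskianWithin (s : Set 𝕜) (y z : 𝕜 → 𝕜) (x : 𝕜) : 𝕜 :=
  y x * derivWithin z s x - derivWithin y s x * z x

theorem wronskianWithin_eq_zero_of_eq_zero {s : Set 𝕜} {y z : 𝕜 → 𝕜} {x : 𝕜}
    (hy : y x = 0) (hz : z x = 0) : wronskianWithin s y z x = 0 := by
  simp [wronskianWithin, hy, hz]

theorem iteratedDerivWithin_two_eq {F : Type*} [NormedAddCommGroup F] [NormedSpace 𝕜 F]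
    (f : 𝕜 → F) (s : Set 𝕜) :
    iteratedDerivWithin 2 f s = derivWithin (derivWithin f s) s := by
  rw [iteratedDerivWithin_succ, iteratedDerivWithin_one]

theorem ContDiffOn.hasDerivWithinAt_derivWithin {f : 𝕜 → 𝕜} {s : Set 𝕜} {x : 𝕜}
    (hf : ContDiffOn 𝕜 2 f s) (hs : UniqueDiffOn 𝕜 s) (hx : x ∈ s) :
    HasDerivWithinAt (derivWithin f s) (iteratedDerivWithin 2 f s x) s x := by
  rw [iteratedDerivWithin_two_eq]
  exact ((hf.derivWithin hs (by norm_num : (1 : WithTop ℕ∞) + 1 ≤ 2)).differentiableOn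
    one_ne_zero x hx).hasDerivWithinAt

theorem hasDerivWithinAt_wronskianWithin {s : Set 𝕜} {y z : 𝕜 → 𝕜} {x : 𝕜}
    (hs : UniqueDiffOn 𝕜 s) (hy : ContDiffOn 𝕜 2 y s) (hz : ContDiffOn 𝕜 2 z s) (hx : x ∈ s) :
    HasDerivWithinAt (wronskianWithin s y z)
      (y x * iteratedDerivWithin 2 z s x - iteratedDerivWithin 2 y s x * z x) s x := by
  have hy₁ := (hy.differentiableOn two_ne_zero x hx).hasDerivWithinAt
  have hz₁ := (hz.differentiableOn two_ne_zero x hx).hasDerivWithinAt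
  exact ((hy₁.mul (hz.hasDerivWithinAt_derivWithin hs hx)).sub
    ((hy.hasDerivWithinAt_derivWithin hs hx).mul hz₁)).congr_deriv (by ring)

end Wronskian

theorem integral_mul_iteratedDerivWithin_two_sub {a b : ℝ} {y z : ℝ → ℝ} (hab : a < b)
    (hy : ContDiffOn ℝ 2 y (Icc a b)) (hz : ContDiffOn ℝ 2 z (Icc a b)) :
    ∫ x in a..b, (y x * iteratedDerivWithin 2 z (Icc a b) x
        - iteratedDerivWithin 2 y (Icc a b) x * z x) =
      wronskianWithin (Icc a b) y z b - wronskianWithin (Icc a b) y z a := by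
  have hs : UniqueDiffOn ℝ (Icc a b) := uniqueDiffOn_Icc hab
  have hW x (hx : x ∈ Icc a b) := hasDerivWithinAt_wronskianWithin hs hy hz hx
  refine intervalIntegral.integral_eq_sub_of_hasDerivAt_of_le hab.le
    (fun x hx => (hW x hx).continuousWithinAt)
    (fun x hx => (hW x (Ioo_subset_Icc_self hx)).hasDerivAt (Icc_mem_nhds hx.1 hx.2)) ?_
  refine ContinuousOn.intervalIntegrable ?_
  rw [uIcc_of_le hab.le]
  have hy₂ := hy.continuousOn_iteratedDerivWithin le_rfl hs
  have hz₂ := hz.continuousOn_iteratedDerivWithin le_rfl hs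
  exact (hy.continuousOn.mul hz₂).sub (hy₂.mul hz.continuousOn)

theorem stmt_5_general (a b : ℝ) (hab : a < b) (q : ℝ → ℝ)
    (lam mu : ℝ) (hne : lam ≠ mu)
    (y z : ℝ → ℝ)
    (hy : ContDiffOn ℝ 2 y (Set.Icc a b))
    (hz : ContDiffOn ℝ 2 z (Set.Icc a b))
    (heqy : ∀ x ∈ Set.Icc a b,
      -(iteratedDerivWithin 2 y (Set.Icc a b) x) + q x * y x = lam * y x)
    (heqz : ∀ x ∈ Set.Icc a b,
      -(iteratedDerivWithin 2 z (Set.Icc a b) x) + q x * z x = mu * z x)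
    (hya : y a = 0) (hyb : y b = 0) (hza : z a = 0) (hzb : z b = 0) :
    ∫ x in a..b, y x * z x = 0 := by
  have hlagrange := integral_mul_iteratedDerivWithin_two_sub hab hy hz
  rw [wronskianWithin_eq_zero_of_eq_zero hyb hzb, wronskianWithin_eq_zero_of_eq_zero hya hza,
    sub_zero] at hlagrange
  have hintegrand : ∀ x ∈ uIcc a b, y x * iteratedDerivWithin 2 z (Icc a b) x
      - iteratedDerivWithin 2 y (Icc a b) x * z x = (lam - mu) * (y x * z x) := by
    intro x hx
    rw [uIcc_of_le hab.le] at hx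
    linear_combination z x * heqy x hx - y x * heqz x hx
  rw [intervalIntegral.integral_congr hintegrand, intervalIntegral.integral_const_mul] at hlagrange
  exact (mul_eq_zero.mp hlagrange).resolve_left (sub_ne_zero.mpr hne)

/-- Orthogonality of eigenfunctions of the Dirichlet Sturm-Liouville problem
`-u'' + q u = λ u` on `[a, b]` associated to distinct eigenvalues:
`∫_a^b y z = 0`. -/
theorem stmt_5 (a b : ℝ) (hab : a < b) (q : ℝ → ℝ)
    (hq : ContinuousOn q (Set.Icc a b)) (lam mu : ℝ) (hne : lam ≠ mu)
    (y z : ℝ → ℝ)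
    (hy : ContDiffOn ℝ 2 y (Set.Icc a b))
    (hz : ContDiffOn ℝ 2 z (Set.Icc a b))
    (heqy : ∀ x ∈ Set.Icc a b,
      -(iteratedDerivWithin 2 y (Set.Icc a b) x) + q x * y x = lam * y x)
    (heqz : ∀ x ∈ Set.Icc a b,
      -(iteratedDerivWithin 2 z (Set.Icc a b) x) + q x * z x = mu * z x)
    (hya : y a = 0) (hyb : y b = 0) (hza : z a = 0) (hzb : z b = 0) :
    ∫ x in a..b, y x * z x = 0 :=
  stmt_5_general a b hab q lam mu hne y z hy hz heqy heqz hya hyb hza hzb
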